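/- arXiv:2601.03734 — 7 statements merged into one kernel-verified Lean document; each statement's English description precedes it below -/
import Mathlib

section
/- For all x in [0,1], the Shannon binary entropy satisfies 2·H(1/2)·H₂ᵀ(x) ≤ H(x), where H₂ᵀ(x) = 2x(1-x). -/
open Real Set

private noncomputable def Fent : ℝ → ℝ :=
  fun t => 2 * Real.log 2 * t ^ 2 - (1 + t) * Real.log (1 + t) - (1 - t) * Real.log (1 - t)

private noncomputable def Hent : ℝ → ℝ :=
  fun t => 4 * Real.log 2 * t - Real.log (1 + t) + Real.log (1 - t)

private lemma Fent_cont : Continuous Fent := by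
  unfold Fent
  have h1 : Continuous fun t : ℝ => (1 + t) * Real.log (1 + t) :=
    Real.continuous_mul_log.comp (continuous_const.add continuous_id)
  have h2 : Continuous fun t : ℝ => (1 - t) * Real.log (1 - t) :=
    Real.continuous_mul_log.comp (continuous_const.sub continuous_id)
  fun_prop

private lemma Fent_hasDeriv {t : ℝ} (ht : t ∈ Set.Ioo (-1 : ℝ) 1) :
    HasDerivAt Fent (Hent t) t := by
  obtain ⟨h1, h2⟩ := ht
  have h1' : (1 : ℝ) + t ≠ 0 := by linarith
  have h2' : (1 : ℝ) - t ≠ 0 := by linarith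
  have d1 : HasDerivAt (fun t : ℝ => 1 + t) 1 t := by
    simpa using (hasDerivAt_id t).const_add 1
  have d2 : HasDerivAt (fun t : ℝ => 1 - t) (-1) t := by
    simpa using (hasDerivAt_id t).const_sub 1
  have dl1 : HasDerivAt (fun t : ℝ => Real.log (1 + t)) (1 / (1 + t)) t := by
    simpa using d1.log h1'
  have dl2 : HasDerivAt (fun t : ℝ => Real.log (1 - t)) (-1 / (1 - t)) t := by
    simpa using d2.log h2'
  have dp1 : HasDerivAt (fun t : ℝ => (1 + t) * Real.log (1 + t))
      (1 * Real.log (1 + t) + (1 + t) * (1 / (1 + t))) t := d1.mul dl1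
  have dp2 : HasDerivAt (fun t : ℝ => (1 - t) * Real.log (1 - t))
      ((-1) * Real.log (1 - t) + (1 - t) * (-1 / (1 - t))) t := d2.mul dl2
  have dsq : HasDerivAt (fun t : ℝ => 2 * Real.log 2 * t ^ 2)
      (2 * Real.log 2 * (2 * t)) t := by
    simpa using ((hasDerivAt_pow 2 t).const_mul (2 * Real.log 2))
  have := (dsq.sub dp1).sub dp2
  refine this.congr_deriv ?_
  unfold Hent
  field_simp
  ring

private lemma Hent_hasDeriv {t : ℝ} (ht : t ∈ Set.Ioo (-1 : ℝ) 1) :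
    HasDerivAt Hent (4 * Real.log 2 - 1 / (1 + t) - 1 / (1 - t)) t := by
  obtain ⟨h1, h2⟩ := ht
  have h1' : (1 : ℝ) + t ≠ 0 := by linarith
  have h2' : (1 : ℝ) - t ≠ 0 := by linarith
  have d1 : HasDerivAt (fun t : ℝ => 1 + t) 1 t := by
    simpa using (hasDerivAt_id t).const_add 1
  have d2 : HasDerivAt (fun t : ℝ => 1 - t) (-1) t := by
    simpa using (hasDerivAt_id t).const_sub 1
  have dl1 : HasDerivAt (fun t : ℝ => Real.log (1 + t)) (1 / (1 + t)) t := by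
    simpa using d1.log h1'
  have dl2 : HasDerivAt (fun t : ℝ => Real.log (1 - t)) (-1 / (1 - t)) t := by
    simpa using d2.log h2'
  have dlin : HasDerivAt (fun t : ℝ => 4 * Real.log 2 * t) (4 * Real.log 2) t := by
    simpa using (hasDerivAt_id t).const_mul (4 * Real.log 2)
  have := (dlin.sub dl1).add dl2
  refine this.congr_deriv ?_
  ring

private lemma log2_lb : (0.6931471803 : ℝ) < Real.log 2 := Real.log_two_gt_d9

/-- Key: `F t ≥ 0` on `[0,1]`. -/
private lemma Fent_nonneg {t : ℝ} (ht0 : 0 ≤ t) (ht1 : t ≤ 1) : 0 ≤ Fent t := by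
  have hL := log2_lb
  set L := Real.log 2 with hLdef
  -- t₀
  set t₀ : ℝ := Real.sqrt (1 - 1 / (2 * L)) with ht₀def
  have h2L : (1 : ℝ) < 2 * L := by linarith
  have harg : (0 : ℝ) ≤ 1 - 1 / (2 * L) := by
    have : 1 / (2 * L) < 1 := by
      rw [div_lt_one (by linarith)]; linarith
    linarith
  have ht₀sq : t₀ ^ 2 = 1 - 1 / (2 * L) := Real.sq_sqrt harg
  have ht₀0 : 0 ≤ t₀ := Real.sqrt_nonneg _
  have ht₀1 : t₀ < 1 := by
    nlinarith [ht₀sq, ht₀0, div_pos one_pos (show (0:ℝ) < 2 * L by linarith)]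
  -- H monotone on [0, t₀]
  have hHmono : MonotoneOn Hent (Set.Icc 0 t₀) := by
    apply monotoneOn_of_deriv_nonneg (convex_Icc _ _)
    · intro s hs
      exact (Hent_hasDeriv ⟨by linarith [hs.1], by linarith [hs.2, ht₀1]⟩).continuousAt.continuousWithinAt
    · intro s hs
      rw [interior_Icc] at hs
      exact (Hent_hasDeriv ⟨by linarith [hs.1], by linarith [hs.2, ht₀1]⟩).differentiableAt.differentiableWithinAt
    · intro s hs
      rw [interior_Icc] at hs
      obtain ⟨hs0, hs1⟩ := hs
      have hsm : s ∈ Set.Ioo (-1 : ℝ) 1 := ⟨by linarith, by linarith⟩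
      rw [(Hent_hasDeriv hsm).deriv]
      have h1p : (0 : ℝ) < 1 + s := by linarith
      have h1m : (0 : ℝ) < 1 - s := by linarith
      have hssq : s ^ 2 < 1 - 1 / (2 * L) := by
        have := Real.sqrt_lt_sqrt (sq_nonneg s) (show s ^ 2 < t₀ ^ 2 by nlinarith)
        nlinarith [ht₀sq]
      have key : 1 / (1 + s) + 1 / (1 - s) ≤ 4 * L := by
        rw [div_add_div _ _ (ne_of_gt h1p) (ne_of_gt h1m), div_le_iff₀ (by nlinarith)]
        have h2Lpos : (0 : ℝ) < 2 * L := by linarith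
        have : 1 / (2 * L) < 1 - s ^ 2 := by linarith
        rw [div_lt_iff₀ h2Lpos] at this
        nlinarith
      linarith
  -- H antitone on [t₀, 1)
  have hHanti : AntitoneOn Hent (Set.Ico t₀ 1) := by
    apply antitoneOn_of_deriv_nonpos (convex_Ico _ _)
    · intro s hs
      exact (Hent_hasDeriv ⟨by linarith [hs.1], hs.2⟩).continuousAt.continuousWithinAt
    · intro s hs
      rw [interior_Ico] at hs
      exact (Hent_hasDeriv ⟨by linarith [hs.1], hs.2⟩).differentiableAt.differentiableWithinAt
    · intro s hs
      rw [interior_Ico] at hs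
      obtain ⟨hs0, hs1⟩ := hs
      have hsm : s ∈ Set.Ioo (-1 : ℝ) 1 := ⟨by linarith, hs1⟩
      rw [(Hent_hasDeriv hsm).deriv]
      have h1p : (0 : ℝ) < 1 + s := by linarith
      have h1m : (0 : ℝ) < 1 - s := by linarith
      have hssq : 1 - 1 / (2 * L) < s ^ 2 := by
        nlinarith [ht₀sq, ht₀0]
      have key : 4 * L ≤ 1 / (1 + s) + 1 / (1 - s) := by
        rw [div_add_div _ _ (ne_of_gt h1p) (ne_of_gt h1m), le_div_iff₀ (by nlinarith)]
        have h2Lpos : (0 : ℝ) < 2 * L := by linarith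
        have : 1 - s ^ 2 < 1 / (2 * L) := by linarith
        rw [lt_div_iff₀ h2Lpos] at this
        nlinarith
      linarith
  have hH0 : Hent 0 = 0 := by unfold Hent; simp
  have hHnonneg_left : ∀ s ∈ Set.Icc (0:ℝ) t₀, 0 ≤ Hent s := by
    intro s hs
    have := hHmono (Set.left_mem_Icc.mpr ht₀0) hs hs.1
    rw [hH0] at this; exact this
  have hF0 : Fent 0 = 0 := by unfold Fent; simp
  have hF1 : Fent 1 = 0 := by
    unfold Fent
    simp
    rw [show (1:ℝ) + 1 = 2 by norm_num]
    ring
  rcases eq_or_lt_of_le ht1 with h | ht1'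
  · rw [h, hF1]
  -- t < 1 from here on
  by_cases hsign : 0 ≤ Hent t
  · -- H ≥ 0 on [0, t], so F monotone on [0,t], F t ≥ F 0 = 0
    have hHt : ∀ s ∈ Set.Icc (0:ℝ) t, 0 ≤ Hent s := by
      intro s hs
      rcases le_or_gt s t₀ with hc | hc
      · exact hHnonneg_left s ⟨hs.1, hc⟩
      · -- t₀ < s ≤ t, use antitone: H s ≥ H t ≥ 0
        have : Hent t ≤ Hent s :=
          hHanti ⟨le_of_lt hc, lt_of_le_of_lt hs.2 ht1'⟩
            ⟨le_trans (le_of_lt hc) hs.2, ht1'⟩ hs.2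
        linarith
    have hFmono : MonotoneOn Fent (Set.Icc 0 t) := by
      apply monotoneOn_of_deriv_nonneg (convex_Icc _ _) Fent_cont.continuousOn
      · intro s hs
        rw [interior_Icc] at hs
        exact (Fent_hasDeriv ⟨by linarith [hs.1], by linarith [hs.2]⟩).differentiableAt.differentiableWithinAt
      · intro s hs
        rw [interior_Icc] at hs
        rw [(Fent_hasDeriv ⟨by linarith [hs.1], by linarith [hs.2]⟩).deriv]
        exact hHt s ⟨le_of_lt hs.1, le_of_lt hs.2⟩
    have := hFmono (Set.left_mem_Icc.mpr ht0) (Set.right_mem_Icc.mpr ht0) ht0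
    rw [hF0] at this; exact this
  · push_neg at hsign
    -- H t < 0 forces t₀ < t
    have htgt : t₀ < t := by
      by_contra hcon
      push_neg at hcon
      exact absurd (hHnonneg_left t ⟨ht0, hcon⟩) (not_le.mpr hsign)
    -- H ≤ 0 on (t, 1), so F antitone on [t,1], F t ≥ F 1 = 0
    have hFanti : AntitoneOn Fent (Set.Icc t 1) := by
      apply antitoneOn_of_deriv_nonpos (convex_Icc _ _) Fent_cont.continuousOn
      · intro s hs
        rw [interior_Icc] at hs
        exact (Fent_hasDeriv ⟨by linarith [hs.1], hs.2⟩).differentiableAt.differentiableWithinAt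
      · intro s hs
        rw [interior_Icc] at hs
        obtain ⟨hs1, hs2⟩ := hs
        rw [(Fent_hasDeriv ⟨by linarith, hs2⟩).deriv]
        have : Hent s ≤ Hent t :=
          hHanti ⟨le_of_lt htgt, ht1'⟩ ⟨le_of_lt (lt_trans htgt hs1), hs2⟩ (le_of_lt hs1)
        linarith
    have := hFanti (Set.left_mem_Icc.mpr ht1) (Set.right_mem_Icc.mpr ht1) ht1
    rw [hF1] at this; linarith

private lemma Fent_nonneg' {t : ℝ} (ht0 : -1 ≤ t) (ht1 : t ≤ 1) : 0 ≤ Fent t := by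
  rcases le_or_gt 0 t with h | h
  · exact Fent_nonneg h ht1
  · have : Fent (-t) = Fent t := by unfold Fent; ring_nf
    rw [← this]
    exact Fent_nonneg (by linarith) (by linarith)

/-- For all `x ∈ [0,1]`, `2·H(1/2)·H₂ᵀ(x) ≤ H(x)`, i.e.
`2·ln 2·(2x(1-x)) ≤ -x ln x - (1-x) ln (1-x)`. -/
theorem binary_entropy_lower_bound (x : ℝ) (hx0 : 0 ≤ x) (hx1 : x ≤ 1) :
    2 * Real.log 2 * (2 * x * (1 - x)) ≤
      -(x * Real.log x) - (1 - x) * Real.log (1 - x) := by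
  rcases eq_or_lt_of_le hx0 with h | hx0'
  · simp [← h]
  rcases eq_or_lt_of_le hx1 with h | hx1'
  · simp [h]
  have key := Fent_nonneg' (t := 1 - 2 * x) (by linarith) (by linarith)
  unfold Fent at key
  have e1 : (1 : ℝ) + (1 - 2 * x) = 2 * (1 - x) := by ring
  have e2 : (1 : ℝ) - (1 - 2 * x) = 2 * x := by ring
  rw [e1, e2, Real.log_mul (by norm_num) (by linarith),
    Real.log_mul (by norm_num) (ne_of_gt hx0')] at key
  nlinarith [key]
end

section
/- For all x in [0,1], the Shannon binary entropy satisfies H(x) ≤ √2·ln(2)·√(2x(1-x)), i.e., H(x) ≤ √2·H(1/2)·√(H₂ᵀ(x)). -/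
lemma log_le_half_sub_inv {u : ℝ} (hu : 1 ≤ u) : Real.log u ≤ (u - u⁻¹) / 2 := by
  have h0 : 0 < u := lt_of_lt_of_le one_pos hu
  calc Real.log u ≤ Real.sinh (Real.log u) :=
        Real.self_le_sinh_iff.mpr (Real.log_nonneg hu)
    _ = (u - u⁻¹) / 2 := Real.sinh_log h0

lemma neg_mul_log_le_sqrt {x : ℝ} (hx : 0 < x) (hx1 : x ≤ 1) :
    -(x * Real.log x) ≤ Real.sqrt x * (1 - x) := by
  set s := Real.sqrt x with hs_def
  have hs0 : 0 < s := Real.sqrt_pos.mpr hx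
  have hss : s * s = x := Real.mul_self_sqrt hx.le
  have hs1 : s ≤ 1 := by nlinarith
  have hu : 1 ≤ s⁻¹ := (one_le_inv₀ hs0).mpr hs1
  have hlog : Real.log s⁻¹ ≤ (s⁻¹ - (s⁻¹)⁻¹) / 2 := log_le_half_sub_inv hu
  rw [Real.log_inv, inv_inv] at hlog
  have hlogs : Real.log s = Real.log x / 2 := Real.log_sqrt hx.le
  -- -log x ≤ s⁻¹ - s
  have h2 : -Real.log x ≤ s⁻¹ - s := by rw [hlogs] at hlog; linarith
  have h4 : x * s⁻¹ = s := by
    rw [← hss]; exact mul_inv_cancel_right₀ hs0.ne' s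
  have h5 := mul_le_mul_of_nonneg_left h2 hx.le
  have h6 : x * (s⁻¹ - s) = x * s⁻¹ - x * s := by ring
  rw [h6, h4] at h5
  nlinarith [h5]

set_option maxHeartbeats 2000000 in
theorem main_half (x : ℝ) (hx0 : 0 ≤ x) (hx1 : x ≤ 1/2) :
    -(x * Real.log x) - (1 - x) * Real.log (1 - x) ≤
      Real.log 2 * (2 * Real.sqrt (x * (1 - x))) := by
  rcases eq_or_lt_of_le hx0 with h0 | hx0'
  · rw [← h0]
    simp [Real.log_one]
  rcases le_or_gt x (11/40) with hcase | hcase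
  · -- small x : use sqrt bound
    have h1 : -(x * Real.log x) ≤ Real.sqrt x * (1 - x) :=
      neg_mul_log_le_sqrt hx0' (by linarith)
    have h2 : -((1 - x) * Real.log (1 - x)) ≤ Real.sqrt (1 - x) * (1 - (1 - x)) :=
      neg_mul_log_le_sqrt (by linarith) (by linarith)
    set a := Real.sqrt x with ha_def
    set b := Real.sqrt (1 - x) with hb_def
    have ha : a * a = x := Real.mul_self_sqrt hx0
    have hb : b * b = 1 - x := Real.mul_self_sqrt (by linarith)
    have ha0 : 0 ≤ a := Real.sqrt_nonneg _
    have hb0 : 0 ≤ b := Real.sqrt_nonneg _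
    have hab : Real.sqrt (x * (1 - x)) = a * b := Real.sqrt_mul hx0 _
    have habU : a * b ≤ 4466/10000 := by
      nlinarith [mul_nonneg (by linarith : (0:ℝ) ≤ 11/40 - x)
        (by linarith : (0:ℝ) ≤ 29/40 - x), mul_nonneg ha0 hb0]
    have hsum : a + b ≤ 2 * Real.log 2 := by
      nlinarith [Real.log_two_gt_d9, ha, hb, habU, mul_nonneg ha0 hb0]
    have h4 : (a * b) * (a + b) ≤ (a * b) * (2 * Real.log 2) :=
      mul_le_mul_of_nonneg_left hsum (mul_nonneg ha0 hb0)
    have h5 : a * (1 - x) + b * (1 - (1 - x)) = (a * b) * (a + b) := by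
      linear_combination (-a) * hb + (-b) * ha
    rw [hab]
    linarith
  · -- central region
    obtain ⟨d, hd_def⟩ : ∃ d : ℝ, d = 1 - 2*x := ⟨_, rfl⟩
    have hd0 : 0 ≤ d := by rw [hd_def]; linarith
    have hd1 : d ≤ 9/20 := by rw [hd_def]; linarith
    have hdlt : |d| < 1 := by rw [abs_of_nonneg hd0]; linarith
    have hm := Real.abs_log_sub_add_sum_range_le hdlt 5
    have hdlt' : |(-d)| < 1 := by rwa [abs_neg]
    have hp := Real.abs_log_sub_add_sum_range_le hdlt' 5
    rw [abs_of_nonneg hd0] at hm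
    rw [abs_neg, abs_of_nonneg hd0] at hp
    have hsum1 : (∑ i ∈ Finset.range 5, d ^ (i+1) / ((i:ℝ)+1))
        = d + d^2/2 + d^3/3 + d^4/4 + d^5/5 := by
      simp [Finset.sum_range_succ]
      ring
    have hsum2 : (∑ i ∈ Finset.range 5, (-d) ^ (i+1) / ((i:ℝ)+1))
        = -d + d^2/2 - d^3/3 + d^4/4 - d^5/5 := by
      simp [Finset.sum_range_succ]
      ring
    rw [hsum1] at hm
    rw [hsum2] at hp
    have hone : (1:ℝ) - -d = 1 + d := by ring
    rw [hone] at hp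
    obtain ⟨r, hr_def⟩ : ∃ r : ℝ, r = d^6/(1-d) := ⟨_, rfl⟩
    rw [← hr_def] at hm hp
    have hm' := abs_le.mp hm
    have hp' := abs_le.mp hp
    have hlog1 : -(d + d^2/2 + d^3/3 + d^4/4 + d^5/5) - r ≤ Real.log (1 - d) := by
      have := hm'.2; linarith
    have hlog2 : (d - d^2/2 + d^3/3 - d^4/4 + d^5/5) - r ≤ Real.log (1 + d) := by
      have := hp'.2; linarith
    have hrem : r ≤ (20/11) * d^6 := by
      rw [hr_def, div_le_iff₀ (by linarith : (0:ℝ) < 1 - d)]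
      nlinarith [mul_nonneg (pow_nonneg hd0 6) (by linarith : (0:ℝ) ≤ 9 - 20*d)]
    -- multiply the log bounds
    have m1 : (1 - d) * (-(d + d^2/2 + d^3/3 + d^4/4 + d^5/5) - r)
        ≤ (1 - d) * Real.log (1 - d) :=
      mul_le_mul_of_nonneg_left hlog1 (by linarith)
    have m2 : (1 + d) * ((d - d^2/2 + d^3/3 - d^4/4 + d^5/5) - r)
        ≤ (1 + d) * Real.log (1 + d) :=
      mul_le_mul_of_nonneg_left hlog2 (by linarith)
    have hPsum : d^2 + d^4/6 + 2*d^6/5 - 2*r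
        ≤ (1 - d) * Real.log (1 - d) + (1 + d) * Real.log (1 + d) := by
      have hr2 : (1 - d) * (-(d + d^2/2 + d^3/3 + d^4/4 + d^5/5) - r)
          + (1 + d) * ((d - d^2/2 + d^3/3 - d^4/4 + d^5/5) - r)
          = d^2 + d^4/6 + 2*d^6/5 - 2*r := by ring
      linarith [m1, m2]
    -- the entropy identity
    have e1 : (1:ℝ) - d = 2*x := by rw [hd_def]; ring
    have e2 : (1:ℝ) + d = 2*(1-x) := by rw [hd_def]; ring
    have hL : -(x * Real.log x) - (1 - x) * Real.log (1 - x)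
        = Real.log 2 - ((1 - d) * Real.log (1 - d) + (1 + d) * Real.log (1 + d)) / 2 := by
      rw [e1, e2, Real.log_mul two_ne_zero (ne_of_gt hx0'),
        Real.log_mul two_ne_zero (by linarith : (0:ℝ) < 1 - x).ne']
      ring
    obtain ⟨s, hs_def⟩ : ∃ s : ℝ, s = 2 * Real.sqrt (x * (1 - x)) := ⟨_, rfl⟩
    have hs0 : 0 ≤ s := by rw [hs_def]; positivity
    have hq : Real.sqrt (x * (1 - x)) ^ 2 = x * (1 - x) :=
      Real.sq_sqrt (mul_nonneg hx0 (by linarith))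
    have hs2 : s^2 = 1 - d^2 := by
      rw [hs_def, hd_def]
      linear_combination 4 * hq
    have hd2 : d^2 ≤ 81/400 := by nlinarith
    have hsge : 893/1000 ≤ s := by
      nlinarith [hs2, hs0, hd2]
    have hd4 : d^4 ≤ (81/400) * d^2 := by nlinarith [sq_nonneg d]
    have hd6 : d^6 ≤ (81/400) * d^4 := by nlinarith [pow_nonneg hd0 4]
    have hQ : (43/100) * d^2 ≤ d^2/2 + d^4/12 + d^6/5 - (20/11)*d^6 := by
      nlinarith [hd4, hd6, pow_nonneg hd0 6, pow_nonneg hd0 4]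
    have h1s : (0:ℝ) < 1 + s := by linarith
    have key : Real.log 2 * (1 - s) * (1 + s)
        ≤ (d^2/2 + d^4/12 + d^6/5 - (20/11)*d^6) * (1 + s) := by
      have hls : Real.log 2 * (1 - s) * (1 + s) = Real.log 2 * d^2 := by
        linear_combination (-(Real.log 2)) * hs2
      rw [hls]
      have hl2 : Real.log 2 ≤ 6931471808/10000000000 := by
        have := Real.log_two_lt_d9.le
        norm_num at this ⊢
        linarith
      have c1 : Real.log 2 * d^2 ≤ (6931471808/10000000000) * d^2 :=
        mul_le_mul_of_nonneg_right hl2 (sq_nonneg d)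
      have c2 : (43/100)*d^2*(1+s) ≤ (d^2/2 + d^4/12 + d^6/5 - (20/11)*d^6)*(1+s) :=
        mul_le_mul_of_nonneg_right hQ (by linarith)
      have c3 : (43/100)*d^2*(1 + 893/1000) ≤ (43/100)*d^2*(1+s) := by
        have hdn : (0:ℝ) ≤ (43/100)*d^2 := by positivity
        nlinarith [mul_le_mul_of_nonneg_left hsge hdn]
      nlinarith [c1, c2, c3]
    have hA : Real.log 2 * (1 - s) ≤ d^2/2 + d^4/12 + d^6/5 - (20/11)*d^6 :=
      le_of_mul_le_mul_right key h1s
    have hexp : Real.log 2 * (1 - s) = Real.log 2 - Real.log 2 * s := by ring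
    rw [hL, ← hs_def]
    linarith [hrem, hPsum, hA]

/-- For all `x ∈ [0,1]`, `H(x) ≤ √2·H(1/2)·√(H₂ᵀ(x))`, i.e.
`-x ln x - (1-x) ln (1-x) ≤ √2·ln 2·√(2x(1-x))`. -/
theorem binary_entropy_upper_bound (x : ℝ) (hx0 : 0 ≤ x) (hx1 : x ≤ 1) :
    -(x * Real.log x) - (1 - x) * Real.log (1 - x) ≤
      Real.sqrt 2 * Real.log 2 * Real.sqrt (2 * x * (1 - x)) := by
  have hrhs : Real.sqrt 2 * Real.log 2 * Real.sqrt (2 * x * (1 - x))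
      = Real.log 2 * (2 * Real.sqrt (x * (1 - x))) := by
    rw [show (2:ℝ) * x * (1 - x) = 2 * (x * (1 - x)) by ring,
      Real.sqrt_mul (by norm_num : (0:ℝ) ≤ 2)]
    have h2 : Real.sqrt 2 * Real.sqrt 2 = 2 := Real.mul_self_sqrt (by norm_num)
    linear_combination (Real.log 2 * Real.sqrt (x * (1 - x))) * h2
  rw [hrhs]
  rcases le_or_gt x (1/2) with h | h
  · exact main_half x hx0 h
  · have hmain := main_half (1 - x) (by linarith) (by linarith)
    rw [show (1:ℝ) - (1 - x) = x by ring, show (1 - x) * x = x * (1 - x) by ring] at hmain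
    linarith
end

section
/- For every real α ≥ 2 and every x in [0,1], the α-Rényi binary entropy satisfies (α/(2(α-1)))·H₂ᴿ(x) ≤ Hₐᴿ(x). -/
/-- Auxiliary: for `0 ≤ a ≤ s` and `1 ≤ p`, `a^p ≤ a * s^(p-1)`. -/
lemma renyi_aux (a s p : ℝ) (ha : 0 ≤ a) (has : a ≤ s) (hp : 1 ≤ p) :
    a ^ p ≤ a * s ^ (p - 1) := by
  rcases ha.eq_or_lt with h | h
  · rw [← h, Real.zero_rpow (by linarith), zero_mul]
  · have : a ^ p = a * a ^ (p - 1) := by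
      nth_rewrite 2 [← Real.rpow_one a]
      rw [← Real.rpow_add h]
      ring_nf
    rw [this]
    exact mul_le_mul_of_nonneg_left (Real.rpow_le_rpow ha has (by linarith)) ha

/-- For `α ≥ 2` and `x ∈ [0,1]`, `(α/(2(α-1)))·H₂ᴿ(x) ≤ Hₐᴿ(x)`,
where `Hₐᴿ(x) = ln(x^α + (1-x)^α)/(1-α)` and `H₂ᴿ(x) = -ln(x² + (1-x)²)`. -/
theorem renyi_binary_entropy_lower_bound (α x : ℝ) (hα : 2 ≤ α)
    (hx0 : 0 ≤ x) (hx1 : x ≤ 1) :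
    (α / (2 * (α - 1))) * (-Real.log (x ^ (2 : ℝ) + (1 - x) ^ (2 : ℝ))) ≤
      Real.log (x ^ α + (1 - x) ^ α) / (1 - α) := by
  have hy0 : (0:ℝ) ≤ 1 - x := by linarith
  set s : ℝ := x ^ (2:ℝ) + (1 - x) ^ (2:ℝ) with hs
  have hx2 : x ^ (2:ℝ) = x * x := by
    rw [show (2:ℝ) = ((2:ℕ):ℝ) by norm_num, Real.rpow_natCast]; ring
  have hy2 : (1-x) ^ (2:ℝ) = (1-x) * (1-x) := by
    rw [show (2:ℝ) = ((2:ℕ):ℝ) by norm_num, Real.rpow_natCast]; ring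
  have hspos : 0 < s := by
    rw [hs, hx2, hy2]; nlinarith [sq_nonneg (2*x - 1)]
  have hxs : x ^ (2:ℝ) ≤ s := by
    have : 0 ≤ (1-x) ^ (2:ℝ) := Real.rpow_nonneg hy0 _
    linarith [hs.le]
  have hys : (1-x) ^ (2:ℝ) ≤ s := by
    have : 0 ≤ x ^ (2:ℝ) := Real.rpow_nonneg hx0 _
    linarith [hs.le]
  have hp : (1:ℝ) ≤ α / 2 := by linarith
  -- key power inequality : x^α + (1-x)^α ≤ s^(α/2)
  have hxa : x ^ α = (x ^ (2:ℝ)) ^ (α/2) := by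
    rw [← Real.rpow_mul hx0]
    congr 1; ring
  have hya : (1-x) ^ α = ((1-x) ^ (2:ℝ)) ^ (α/2) := by
    rw [← Real.rpow_mul hy0]
    congr 1; ring
  have h1 : x ^ α ≤ x ^ (2:ℝ) * s ^ (α/2 - 1) := by
    rw [hxa]; exact renyi_aux _ _ _ (Real.rpow_nonneg hx0 _) hxs hp
  have h2 : (1-x) ^ α ≤ (1-x) ^ (2:ℝ) * s ^ (α/2 - 1) := by
    rw [hya]; exact renyi_aux _ _ _ (Real.rpow_nonneg hy0 _) hys hp
  have hsum : x ^ α + (1-x) ^ α ≤ s ^ (α/2) := by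
    have : x ^ (2:ℝ) * s ^ (α/2 - 1) + (1-x) ^ (2:ℝ) * s ^ (α/2 - 1)
        = s ^ (α/2) := by
      rw [← add_mul, ← hs]
      nth_rewrite 1 [← Real.rpow_one s]
      rw [← Real.rpow_add hspos]
      ring_nf
    linarith
  have hspow : 0 < x ^ α + (1-x) ^ α := by
    rcases lt_or_eq_of_le hx0 with h | h
    · have := Real.rpow_pos_of_pos h α
      have := Real.rpow_nonneg hy0 α
      linarith
    · have : (1-x) ^ α = 1 := by rw [← h]; simp
      have := Real.rpow_nonneg hx0 α
      linarith
  have hlog : Real.log (x ^ α + (1-x) ^ α) ≤ (α/2) * Real.log s := by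
    calc Real.log (x ^ α + (1-x) ^ α) ≤ Real.log (s ^ (α/2)) :=
          Real.log_le_log hspow hsum
      _ = (α/2) * Real.log s := Real.log_rpow hspos _
  -- conclude by arithmetic
  have hα1 : 0 < α - 1 := by linarith
  have hne : α - 1 ≠ 0 := ne_of_gt hα1
  rw [le_div_iff_of_neg (by linarith : (1:ℝ) - α < 0)]
  have hL : α / (2 * (α - 1)) * (-Real.log s) * (1 - α) = α / 2 * Real.log s := by
    field_simp
    ring
  rw [hL]
  exact hlog
end

section
/- For every real q with 0 < q ≤ 2, q ≠ 1, and every x in [0,1], the q-Tsallis binary entropy satisfies Hqᵀ(x) ≤ 2^(q/2)·Hqᵀ(1/2)·(H₂ᵀ(x))^(q/2). -/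
/-!
Multiplying by `(q-1)²` turns the claim into
`(q-1)((s+t)^q - s^q - t^q) ≤ (q-1)(2^q - 2)(st)^{q/2}` for `s = x`, `t = 1 - x`, which treats
`q < 1` and `q > 1` at once. Writing `s = m e^y`, `t = m e^{-y}` and dividing by `m^q`, this says
that `(q-1)((e^y + e^{-y})^q - e^{qy} - e^{-qy})` is largest at `y = 0`. Its derivative is
`-q(q-1)(a^q - b^q - (a-b)(a+b)^{q-1})` with `a = e^y ≥ b = e^{-y}`, and this is `≤ 0`:
normalising `a + b = 1`, the function `u ↦ (q-1)(u^q - (1-u)^q)` is concave on `[1/2, 1]`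
for `0 < q ≤ 2` and agrees with its chord `(q-1)(2u-1)` at both ends.
-/

open Real Set

/-- The `q`-Tsallis binary entropy `Hqᵀ(x) = (1 - x^q - (1-x)^q)/(q-1)`. -/
noncomputable def tsallisBin (q x : ℝ) : ℝ := (1 - x ^ q - (1 - x) ^ q) / (q - 1)

theorem hasDerivAt_one_sub_rpow {u : ℝ} (p : ℝ) (hu : u < 1) :
    HasDerivAt (fun u : ℝ => (1 - u) ^ p) (-(p * (1 - u) ^ (p - 1))) u := by
  simpa using ((hasDerivAt_id u).const_sub 1).rpow_const (p := p) (Or.inl (sub_ne_zero.2 hu.ne'))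

section
variable {q : ℝ}

theorem concaveOn_sub_one_mul_rpow_sub_rpow_sub_chord (hq0 : 0 < q) (hq2 : q ≤ 2) :
    ConcaveOn ℝ (Icc (1 / 2) 1) fun u : ℝ => (q - 1) * (u ^ q - (1 - u) ^ q - (2 * u - 1)) := by
  refine concaveOn_of_hasDerivWithinAt2_nonpos (convex_Icc _ _) ?_
    (f' := fun u => (q - 1) * (q * u ^ (q - 1) + q * (1 - u) ^ (q - 1) - 2))
    (f'' := fun u => q * (q - 1) ^ 2 * (u ^ (q - 2) - (1 - u) ^ (q - 2))) ?_ ?_ ?_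
  · have hpow : ContinuousOn (fun u : ℝ => u ^ q) (Icc (1 / 2) 1) :=
      continuousOn_id.rpow_const fun _ _ => Or.inr hq0.le
    have hpow' : ContinuousOn (fun u : ℝ => (1 - u) ^ q) (Icc (1 / 2) 1) :=
      (continuous_const.sub continuous_id).continuousOn.rpow_const fun _ _ => Or.inr hq0.le
    exact continuousOn_const.mul ((hpow.sub hpow').sub (by fun_prop))
  all_goals simp only [interior_Icc, mem_Ioo]
  · rintro u ⟨hu, hu1⟩
    have hu0 : u ≠ 0 := by linarith
    have := (((hasDerivAt_rpow_const (p := q) (Or.inl hu0)).sub (hasDerivAt_one_sub_rpow q hu1)).sub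
      (((hasDerivAt_id u).const_mul 2).sub_const 1)).const_mul (q - 1)
    exact (this.congr_deriv (by ring)).hasDerivWithinAt
  · rintro u ⟨hu, hu1⟩
    have hu0 : u ≠ 0 := by linarith
    have := ((((hasDerivAt_rpow_const (p := q - 1) (Or.inl hu0)).const_mul q).add
      ((hasDerivAt_one_sub_rpow (q - 1) hu1).const_mul q)).sub_const 2).const_mul (q - 1)
    exact (this.congr_deriv (by ring_nf)).hasDerivWithinAt
  · rintro u ⟨hu, hu1⟩
    have hle : u ^ (q - 2) ≤ (1 - u) ^ (q - 2) :=
      rpow_le_rpow_of_nonpos (by linarith) (by linarith) (by linarith)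
    exact mul_nonpos_of_nonneg_of_nonpos (by positivity) (sub_nonpos.2 hle)

theorem sub_one_mul_rpow_sub_rpow_sub_chord_nonneg (hq0 : 0 < q) (hq2 : q ≤ 2) {u : ℝ}
    (hu : u ∈ Icc (1 / 2) 1) : 0 ≤ (q - 1) * (u ^ q - (1 - u) ^ q - (2 * u - 1)) := by
  have := (concaveOn_sub_one_mul_rpow_sub_rpow_sub_chord hq0 hq2).min_le_of_mem_Icc
    (left_mem_Icc.2 (by norm_num)) (right_mem_Icc.2 (by norm_num)) hu
  norm_num [zero_rpow hq0.ne'] at this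
  exact this

theorem sub_one_mul_rpow_sub_rpow_sub_mul_rpow_nonneg (hq0 : 0 < q) (hq2 : q ≤ 2) {a b : ℝ}
    (ha : 0 < a) (hb : 0 ≤ b) (hba : b ≤ a) :
    0 ≤ (q - 1) * (a ^ q - b ^ q - (a - b) * (a + b) ^ (q - 1)) := by
  have hab : 0 < a + b := by linarith
  have hu : a / (a + b) ∈ Icc (1 / 2) 1 :=
    ⟨by rw [le_div_iff₀ hab]; linarith, (div_le_one hab).2 (by linarith)⟩
  have key := mul_nonneg (sub_one_mul_rpow_sub_rpow_sub_chord_nonneg hq0 hq2 hu)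
    (rpow_nonneg hab.le q)
  rw [one_sub_div hab.ne', add_sub_cancel_left, div_rpow ha.le hab.le, div_rpow hb hab.le] at key
  refine key.trans_eq ?_
  rw [rpow_sub_one hab.ne']
  field_simp
  ring

theorem sub_one_mul_exp_add_exp_neg_rpow_le (hq0 : 0 < q) (hq2 : q ≤ 2) {y : ℝ} (hy : 0 ≤ y) :
    (q - 1) * ((exp y + exp (-y)) ^ q - exp (q * y) - exp (-(q * y))) ≤
      (q - 1) * (2 ^ q - 2) := by
  let h : ℝ → ℝ := fun y => (q - 1) * ((exp y + exp (-y)) ^ q - exp (q * y) - exp (-(q * y)))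
  have hderiv (y : ℝ) : HasDerivAt h ((q - 1) * ((exp y - exp (-y)) * q *
      (exp y + exp (-y)) ^ (q - 1) - q * exp (q * y) + q * exp (-(q * y)))) y := by
    have hsum : HasDerivAt (fun y => exp y + exp (-y)) (exp y - exp (-y)) y :=
      ((hasDerivAt_exp y).add (hasDerivAt_neg y).exp).congr_deriv (by ring)
    have hlin : HasDerivAt (fun y => q * y) q y := by simpa using (hasDerivAt_id y).const_mul q
    have hneg : HasDerivAt (fun y => -(q * y)) (-q) y := hlin.neg
    have := (((hsum.rpow_const (p := q) (Or.inl (by positivity))).sub hlin.exp).sub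
      hneg.exp).const_mul (q - 1)
    exact this.congr_deriv (by ring)
  have hanti : AntitoneOn h (Ici 0) := by
    have hcont : Continuous h := continuous_iff_continuousAt.2 fun y => (hderiv y).continuousAt
    refine antitoneOn_of_hasDerivWithinAt_nonpos (convex_Ici 0) hcont.continuousOn
      (fun y _ => (hderiv y).hasDerivWithinAt) ?_
    rintro y hy
    rw [interior_Ici, mem_Ioi] at hy
    have key := sub_one_mul_rpow_sub_rpow_sub_mul_rpow_nonneg hq0 hq2 (exp_pos y)
      (exp_pos (-y)).le (exp_le_exp.2 (by linarith))
    rw [← exp_mul, ← exp_mul, neg_mul, mul_comm y q] at key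
    linarith [mul_nonneg hq0.le key]
  have h0 : h 0 = (q - 1) * (2 ^ q - 2) := by
    simp only [h, mul_zero, neg_zero, exp_zero, one_add_one_eq_two]
    ring
  exact h0 ▸ hanti self_mem_Ici hy hy

theorem sub_one_mul_add_rpow_sub_rpow_sub_rpow_le (hq0 : 0 < q) (hq2 : q ≤ 2) {s t : ℝ}
    (hs : 0 ≤ s) (ht : 0 ≤ t) :
    (q - 1) * ((s + t) ^ q - s ^ q - t ^ q) ≤ (q - 1) * (2 ^ q - 2) * (s * t) ^ (q / 2) := by
  wlog hts : t ≤ s generalizing s t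
  · have := this ht hs (le_of_not_ge hts)
    rwa [add_comm t, mul_comm t, sub_right_comm] at this
  rcases ht.eq_or_lt with rfl | ht
  · simp [zero_rpow hq0.ne', zero_rpow (by positivity : q / 2 ≠ 0)]
  obtain ⟨c, y, hy, rfl, rfl⟩ :
      ∃ c y, 0 ≤ y ∧ s = exp c * exp y ∧ t = exp c * exp (-y) := by
    refine ⟨(log s + log t) / 2, (log s - log t) / 2, by linarith [log_le_log ht hts], ?_, ?_⟩
    · rw [← exp_add, show (log s + log t) / 2 + (log s - log t) / 2 = log s by ring,
        exp_log (ht.trans_le hts)]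
    · rw [← exp_add, show (log s + log t) / 2 + -((log s - log t) / 2) = log t by ring,
        exp_log ht]
  have hsum : (exp c * exp y + exp c * exp (-y)) ^ q = exp (q * c) * (exp y + exp (-y)) ^ q := by
    rw [← mul_add, mul_rpow (exp_pos c).le (by positivity), ← exp_mul, mul_comm c]
  have hpow (z : ℝ) : (exp c * exp z) ^ q = exp (q * c) * exp (q * z) := by
    rw [← exp_add, ← exp_mul, ← exp_add]
    ring_nf
  have hprod : (exp c * exp y * (exp c * exp (-y))) ^ (q / 2) = exp (q * c) := by
    rw [← exp_add, ← exp_add, ← exp_add, ← exp_mul]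
    ring_nf
  rw [hsum, hpow, hpow, hprod, mul_neg]
  calc (q - 1) * (exp (q * c) * (exp y + exp (-y)) ^ q - exp (q * c) * exp (q * y)
        - exp (q * c) * exp (-(q * y)))
      = exp (q * c) * ((q - 1) * ((exp y + exp (-y)) ^ q - exp (q * y) - exp (-(q * y)))) := by
        ring
    _ ≤ exp (q * c) * ((q - 1) * (2 ^ q - 2)) :=
        mul_le_mul_of_nonneg_left (sub_one_mul_exp_add_exp_neg_rpow_le hq0 hq2 hy) (exp_pos _).le
    _ = (q - 1) * (2 ^ q - 2) * exp (q * c) := by ring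
end

theorem tsallisBin_half (q : ℝ) : tsallisBin q (1 / 2) = (1 - 2 ^ (1 - q)) / (q - 1) := by
  rw [tsallisBin, show (1 : ℝ) - 1 / 2 = 1 / 2 by norm_num, one_div, inv_rpow zero_le_two,
    rpow_sub two_pos, rpow_one]
  ring

theorem tsallis_binary_entropy_upper_bound_general (q x : ℝ) (hq0 : 0 < q) (hq2 : q ≤ 2)
    (hx0 : 0 ≤ x) (hx1 : x ≤ 1) :
    tsallisBin q x ≤ (2 : ℝ) ^ (q / 2) * tsallisBin q (1 / 2) * (2 * x * (1 - x)) ^ (q / 2) := by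
  have hx : 0 ≤ 1 - x := sub_nonneg.2 hx1
  have hrhs : (2 : ℝ) ^ (q / 2) * tsallisBin q (1 / 2) * (2 * x * (1 - x)) ^ (q / 2)
      = (2 ^ q - 2) * (x * (1 - x)) ^ (q / 2) / (q - 1) := by
    have h1 : (2 : ℝ) ^ (q / 2) * 2 ^ (q / 2) = 2 ^ q := by rw [← rpow_add two_pos, add_halves]
    have h2 : (2 : ℝ) ^ q * 2 ^ (1 - q) = 2 := by rw [← rpow_add two_pos]; norm_num
    rw [tsallisBin_half, mul_assoc 2 x, mul_rpow zero_le_two (mul_nonneg hx0 hx)]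
    linear_combination ((1 - 2 ^ (1 - q)) * (x * (1 - x)) ^ (q / 2) / (q - 1)) * h1
      - ((x * (1 - x)) ^ (q / 2) / (q - 1)) * h2
  have key := sub_one_mul_add_rpow_sub_rpow_sub_rpow_le hq0 hq2 hx0 hx
  rw [add_sub_cancel, one_rpow] at key
  rw [hrhs, tsallisBin, ← sub_nonneg, ← sub_div]
  exact div_nonneg_iff.2 (mul_nonneg_iff.1 (by linarith))

/-- For `0 < q ≤ 2`, `q ≠ 1`, and `x ∈ [0,1]`,
`Hqᵀ(x) ≤ 2^(q/2)·Hqᵀ(1/2)·(2x(1-x))^(q/2)`. -/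
theorem tsallis_binary_entropy_upper_bound (q x : ℝ) (hq0 : 0 < q) (hq2 : q ≤ 2)
    (hq1 : q ≠ 1) (hx0 : 0 ≤ x) (hx1 : x ≤ 1) :
    tsallisBin q x ≤ (2 : ℝ) ^ (q / 2) * tsallisBin q (1 / 2) * (2 * x * (1 - x)) ^ (q / 2) :=
  tsallis_binary_entropy_upper_bound_general q x hq0 hq2 hx0 hx1
end

section
/- For every real q in [2,3] and every x in [0,1], the q-Tsallis binary entropy satisfies (q/(2(q-1)))·2x(1-x) ≤ Hqᵀ(x) ≤ 2·Hqᵀ(1/2)·2x(1-x). -/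
/-!
For `y ≥ 0` the map `t ↦ y ^ t` is convex, so `y ^ q ≤ (3 - q) y² + (q - 2) y³` when
`q ∈ [2, 3]`; adding this at `y = x` and `y = 1 - x` gives exactly
`x ^ q + (1 - x) ^ q ≤ 1 - q x (1 - x)`, the lower bound.

For the upper bound put `u = 1 - 2x`, so that `4x(1 - x) = 1 - u²`. It becomes the chord
inequality between `w = 0` and `w = 1` for `K(w) = ((1 + √w) ^ q + (1 - √w) ^ q) / 2` (with
`w = u²`), so it suffices that `K` is concave on `[0, 1]`. Now `K'(w) = (q / 4) N(√w) / √w` with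
`N(s) = (1 + s) ^ (q - 1) - (1 - s) ^ (q - 1)`, and `N(s) / s` decreases because `N` is concave
with `N(0) = 0`: `N'(s) = (q - 1) ((1 + s) ^ (q - 2) + (1 - s) ^ (q - 2))` decreases on
`[0, 1]` since `q - 2 ∈ [0, 1]`.
-/

open Real Set

theorem rpow_le_weighted_pow_add_pow_succ {y q : ℝ} {n : ℕ} (hy : 0 ≤ y) (hnq : n ≤ q)
    (hqn : q ≤ n + 1) : y ^ q ≤ ((n : ℝ) + 1 - q) * y ^ n + (q - n) * y ^ (n + 1) := by
  rcases hy.eq_or_lt with rfl | hy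
  · rcases eq_or_ne q 0 with rfl | hq
    · obtain rfl : n = 0 := by exact_mod_cast le_antisymm hnq (Nat.cast_nonneg n)
      simp
    · rw [zero_rpow hq]
      positivity
  · have h := (convexOn_rpow_left hy).2 (mem_univ (n : ℝ)) (mem_univ ((n : ℝ) + 1))
      (sub_nonneg.2 hqn) (sub_nonneg.2 hnq) (by ring)
    simp only [smul_eq_mul, show ((n : ℝ) + 1 - q) * n + (q - n) * (n + 1) = q by ring] at h
    exact_mod_cast h

theorem mul_le_one_sub_rpow_sub_rpow {q x : ℝ} (hq2 : 2 ≤ q) (hq3 : q ≤ 3) (hx0 : 0 ≤ x)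
    (hx1 : x ≤ 1) : q * (x * (1 - x)) ≤ 1 - x ^ q - (1 - x) ^ q := by
  have h2q : ((2 : ℕ) : ℝ) ≤ q := by norm_num [hq2]
  have hq3' : q ≤ ((2 : ℕ) : ℝ) + 1 := by norm_num; linarith
  have hx := rpow_le_weighted_pow_add_pow_succ hx0 h2q hq3'
  have hx' := rpow_le_weighted_pow_add_pow_succ (sub_nonneg.2 hx1) h2q hq3'
  push_cast at hx hx'
  linear_combination hx + hx'

theorem antitoneOn_one_add_rpow_add_one_sub_rpow {p : ℝ} (hp0 : 0 ≤ p) (hp1 : p ≤ 1) :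
    AntitoneOn (fun s : ℝ => (1 + s) ^ p + (1 - s) ^ p) (Icc 0 1) := by
  have hderiv : ∀ s ∈ Ioo (0 : ℝ) 1, HasDerivAt (fun s : ℝ => (1 + s) ^ p + (1 - s) ^ p)
      (p * (1 + s) ^ (p - 1) - p * (1 - s) ^ (p - 1)) s := fun s ⟨hs0, hs1⟩ =>
    ((((hasDerivAt_id' s).const_add 1).rpow_const (Or.inl (by positivity))).add
      (((hasDerivAt_id' s).const_sub 1).rpow_const (Or.inl (by linarith)))).congr_deriv (by ring)
  refine antitoneOn_of_deriv_nonpos (convex_Icc 0 1) ?_ ?_ ?_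
  · refine ContinuousOn.add ?_ ?_ <;>
      refine ContinuousOn.rpow_const (by fun_prop) fun _ _ => Or.inr hp0
  · rw [interior_Icc]
    exact fun s hs => (hderiv s hs).differentiableAt.differentiableWithinAt
  · rw [interior_Icc]
    intro s hs
    rw [(hderiv s hs).deriv, sub_nonpos]
    exact mul_le_mul_of_nonneg_left
      (rpow_le_rpow_of_nonpos (by linarith [hs.2]) (by linarith [hs.1]) (by linarith)) hp0

theorem concaveOn_one_add_rpow_sub_one_sub_rpow {p : ℝ} (hp1 : 1 ≤ p) (hp2 : p ≤ 2) :
    ConcaveOn ℝ (Icc 0 1) (fun s : ℝ => (1 + s) ^ p - (1 - s) ^ p) := by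
  have hderiv : ∀ s ∈ Ioo (0 : ℝ) 1, HasDerivAt (fun s : ℝ => (1 + s) ^ p - (1 - s) ^ p)
      (p * ((1 + s) ^ (p - 1) + (1 - s) ^ (p - 1))) s := fun s ⟨hs0, hs1⟩ =>
    ((((hasDerivAt_id' s).const_add 1).rpow_const (Or.inl (by positivity))).sub
      (((hasDerivAt_id' s).const_sub 1).rpow_const (Or.inl (by linarith)))).congr_deriv (by ring)
  refine AntitoneOn.concaveOn_of_deriv (convex_Icc 0 1) ?_ ?_ ?_
  · refine ContinuousOn.sub ?_ ?_ <;>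
      refine ContinuousOn.rpow_const (by fun_prop) fun _ _ => Or.inr (by linarith)
  · rw [interior_Icc]
    exact fun s hs => (hderiv s hs).differentiableAt.differentiableWithinAt
  · rw [interior_Icc]
    intro a ha b hb hab
    rw [(hderiv a ha).deriv, (hderiv b hb).deriv]
    exact mul_le_mul_of_nonneg_left (antitoneOn_one_add_rpow_add_one_sub_rpow (by linarith)
      (by linarith) (Ioo_subset_Icc_self ha) (Ioo_subset_Icc_self hb) hab) (by linarith)

theorem antitoneOn_one_add_rpow_sub_one_sub_rpow_div {p : ℝ} (hp1 : 1 ≤ p) (hp2 : p ≤ 2) :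
    AntitoneOn (fun s : ℝ => ((1 + s) ^ p - (1 - s) ^ p) / s) (Ioc 0 1) := by
  intro a ha b hb hab
  have h := (concaveOn_one_add_rpow_sub_one_sub_rpow hp1 hp2).slope_anti
    (left_mem_Icc.2 zero_le_one) ⟨Ioc_subset_Icc_self ha, ha.1.ne'⟩
    ⟨Ioc_subset_Icc_self hb, hb.1.ne'⟩ hab
  simpa [slope_def_field] using h

noncomputable def evenRpowSqrt (q w : ℝ) : ℝ := ((1 + √w) ^ q + (1 - √w) ^ q) / 2

theorem hasDerivAt_evenRpowSqrt {q w : ℝ} (hw : w ∈ Ioo (0 : ℝ) 1) :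
    HasDerivAt (evenRpowSqrt q)
      (q / 4 * (((1 + √w) ^ (q - 1) - (1 - √w) ^ (q - 1)) / √w)) w := by
  obtain ⟨hw0, hw1⟩ := hw
  have hs0 : 0 < √w := sqrt_pos.2 hw0
  have hs1 : √w < 1 := (sqrt_lt' one_pos).2 (by linarith)
  have hsqrt : HasDerivAt (√·) (1 / (2 * √w)) w := hasDerivAt_sqrt hw0.ne'
  exact ((((hsqrt.const_add 1).rpow_const (Or.inl (by positivity))).add
    ((hsqrt.const_sub 1).rpow_const (Or.inl (by linarith)))).div_const 2).congr_deriv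
    (by field_simp; ring)

theorem concaveOn_evenRpowSqrt {q : ℝ} (hq2 : 2 ≤ q) (hq3 : q ≤ 3) :
    ConcaveOn ℝ (Icc 0 1) (evenRpowSqrt q) := by
  refine AntitoneOn.concaveOn_of_deriv (convex_Icc 0 1) ?_ ?_ ?_
  · refine ContinuousOn.div_const (ContinuousOn.add ?_ ?_) 2 <;>
      refine ContinuousOn.rpow_const (by fun_prop) fun _ _ => Or.inr (by linarith)
  · rw [interior_Icc]
    exact fun w hw => hasDerivAt_evenRpowSqrt hw |>.differentiableAt.differentiableWithinAt
  · rw [interior_Icc]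
    intro a ha b hb hab
    rw [(hasDerivAt_evenRpowSqrt ha).deriv, (hasDerivAt_evenRpowSqrt hb).deriv]
    have hsqrt_mem {w : ℝ} (hw : w ∈ Ioo (0 : ℝ) 1) : √w ∈ Ioc 0 1 :=
      ⟨sqrt_pos.2 hw.1, sqrt_le_one.2 hw.2.le⟩
    exact mul_le_mul_of_nonneg_left (antitoneOn_one_add_rpow_sub_one_sub_rpow_div
      (by linarith) (by linarith) (hsqrt_mem ha) (hsqrt_mem hb) (sqrt_le_sqrt hab)) (by linarith)

theorem two_mul_one_sub_sq_add_two_rpow_mul_sq_le {q u : ℝ} (hq2 : 2 ≤ q) (hq3 : q ≤ 3)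
    (hu : |u| ≤ 1) :
    2 * (1 - u ^ 2) + 2 ^ q * u ^ 2 ≤ (1 + u) ^ q + (1 - u) ^ q := by
  have hchord := (concaveOn_evenRpowSqrt hq2 hq3).2 (left_mem_Icc.2 zero_le_one)
    (right_mem_Icc.2 zero_le_one) (sub_nonneg.2 (sq_le_one_iff_abs_le_one u |>.2 hu))
    (sq_nonneg u) (sub_add_cancel 1 (u ^ 2))
  have hsymm : (1 + |u|) ^ q + (1 - |u|) ^ q = (1 + u) ^ q + (1 - u) ^ q := by
    rcases abs_choice u with h | h <;> rw [h]
    rw [sub_neg_eq_add, ← sub_eq_add_neg, add_comm]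
  simp only [evenRpowSqrt, smul_eq_mul, mul_zero, mul_one, zero_add, add_zero, sub_zero,
    sub_self, sqrt_zero, sqrt_one, sqrt_sq_eq_abs, one_rpow, zero_rpow (by linarith : q ≠ 0),
    one_add_one_eq_two, hsymm] at hchord
  linarith

theorem one_sub_rpow_sub_rpow_le {q x : ℝ} (hq2 : 2 ≤ q) (hq3 : q ≤ 3) (hx0 : 0 ≤ x)
    (hx1 : x ≤ 1) : 1 - x ^ q - (1 - x) ^ q ≤ 4 * (1 - 2 ^ (1 - q)) * (x * (1 - x)) := by
  have h := two_mul_one_sub_sq_add_two_rpow_mul_sq_le (u := 1 - 2 * x) hq2 hq3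
    (abs_le.2 ⟨by linarith, by linarith⟩)
  rw [show 1 + (1 - 2 * x) = 2 * (1 - x) by ring, show 1 - (1 - 2 * x) = 2 * x by ring,
    mul_rpow zero_le_two (by linarith), mul_rpow zero_le_two hx0] at h
  have h2q : (2 : ℝ) ^ (1 - q) * 2 ^ q = 2 := by
    rw [← rpow_add zero_lt_two]; norm_num
  linear_combination (2 ^ (1 - q) / 2) * h + (x ^ q + (1 - x) ^ q - (1 - 2 * x) ^ 2) / 2 * h2q

/-- For `q ∈ [2,3]` and `x ∈ [0,1]`,
`(q/(2(q-1)))·2x(1-x) ≤ Hqᵀ(x) ≤ 2·Hqᵀ(1/2)·2x(1-x)`. -/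
theorem tsallis_binary_entropy_bounds_two_le_q_le_three (q x : ℝ) (hq2 : 2 ≤ q) (hq3 : q ≤ 3)
    (hx0 : 0 ≤ x) (hx1 : x ≤ 1) :
    (q / (2 * (q - 1))) * (2 * x * (1 - x)) ≤ tsallisBin q x ∧
      tsallisBin q x ≤ 2 * tsallisBin q (1 / 2) * (2 * x * (1 - x)) := by
  have hq1 : 0 < q - 1 := by linarith
  rw [tsallisBin_half, tsallisBin, le_div_iff₀ hq1, div_le_iff₀ hq1]
  constructor
  · calc q / (2 * (q - 1)) * (2 * x * (1 - x)) * (q - 1) = q * (x * (1 - x)) := by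
          field_simp
      _ ≤ 1 - x ^ q - (1 - x) ^ q := mul_le_one_sub_rpow_sub_rpow hq2 hq3 hx0 hx1
  · calc 1 - x ^ q - (1 - x) ^ q ≤ 4 * (1 - 2 ^ (1 - q)) * (x * (1 - x)) :=
          one_sub_rpow_sub_rpow_le hq2 hq3 hx0 hx1
      _ = 2 * ((1 - 2 ^ (1 - q)) / (q - 1)) * (2 * x * (1 - x)) * (q - 1) := by
          field_simp
          ring
end

section
/- For every real q ≥ 3 and every x in [0,1], the q-Tsallis binary entropy satisfies 2·Hqᵀ(1/2)·2x(1-x) ≤ Hqᵀ(x) ≤ (q/(2(q-1)))·2x(1-x). -/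
/-!
Upper bound: `z ^ p ≥ 1 + p log z ≥ 1 + p (1 - z⁻¹)` gives `z³ - z^q ≤ (q - 3) z² (1 - z)`;
adding this at `z = x` and `z = 1 - x` and using `x³ + (1 - x)³ = 1 - 3x(1 - x)` yields
`1 - x^q - (1 - x)^q ≤ q x (1 - x)`.

Lower bound: with `t = 2x - 1` and after multiplying by `2^q`, it says that
`g t = 2 + (2^q - 2) t² - (1 + t)^q - (1 - t)^q` is nonnegative on `[0, 1]`. Here
`g 0 = g 1 = g' 0 = 0`, and `g''' = -q (q-1) (q-2) ((1 + t)^(q-3) - (1 - t)^(q-3)) ≤ 0` for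
`q ≥ 3`, so `g'` is concave. A concave `g'` with `g' 0 = 0` is nonnegative up to some point and
nonpositive after it, so `g` first increases and then decreases, and stays above `min (g 0) (g 1)`.
-/

open Real Set

theorem nonneg_on_Icc_of_concaveOn_deriv {f f' : ℝ → ℝ} {a b x : ℝ}
    (hf : ∀ y ∈ Icc a b, HasDerivAt f (f' y) y) (hf' : ConcaveOn ℝ (Icc a b) f')
    (hfa : 0 ≤ f a) (hfb : 0 ≤ f b) (hf'a : 0 ≤ f' a) (hx : x ∈ Icc a b) : 0 ≤ f x := by
  have hcont : ContinuousOn f (Icc a b) := fun y hy => (hf y hy).continuousAt.continuousWithinAt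
  have hleft : Icc a x ⊆ Icc a b := Icc_subset_Icc_right hx.2
  have hright : Icc x b ⊆ Icc a b := Icc_subset_Icc_left hx.1
  have hpos : ∀ s ∈ Icc a b, 0 ≤ f' s → ∀ r ∈ Icc a s, 0 ≤ f' r := fun s hs hs' r hr =>
    (le_min hf'a hs').trans (hf'.min_le_of_mem_Icc (left_mem_Icc.2 (hs.1.trans hs.2)) hs hr)
  by_cases hx' : 0 ≤ f' x
  · have hmono : MonotoneOn f (Icc a x) :=
      monotoneOn_of_hasDerivWithinAt_nonneg (convex_Icc a x) (hcont.mono hleft)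
        (fun y hy => (hf y (hleft (interior_subset hy))).hasDerivWithinAt)
        (fun y hy => hpos x hx hx' y (interior_subset hy))
    exact hfa.trans (hmono (left_mem_Icc.2 hx.1) (right_mem_Icc.2 hx.1) hx.1)
  · have hanti : AntitoneOn f (Icc x b) := by
      refine antitoneOn_of_hasDerivWithinAt_nonpos (convex_Icc x b) (hcont.mono hright)
        (fun y hy => (hf y (hright (interior_subset hy))).hasDerivWithinAt) fun y hy => ?_
      rw [interior_Icc] at hy
      by_contra hy'
      exact hx' (hpos y ⟨hx.1.trans hy.1.le, hy.2.le⟩ (not_le.1 hy').le x ⟨hx.1, hy.1.le⟩)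
    exact hfb.trans (hanti (left_mem_Icc.2 hx.2) (right_mem_Icc.2 hx.2) hx.2)

namespace TsallisBin

theorem one_sub_rpow_le {z p : ℝ} (hz : 0 < z) (hp : 0 ≤ p) : 1 - z ^ p ≤ p * (z⁻¹ - 1) := by
  have hlog := one_sub_inv_le_log_of_pos hz
  have hexp : 1 + p * log z ≤ z ^ p := by
    rw [rpow_def_of_pos hz]
    linarith [add_one_le_exp (log z * p)]
  linarith [mul_le_mul_of_nonneg_left hlog hp]

theorem pow_three_sub_rpow_le {z q : ℝ} (hz : 0 ≤ z) (hq : 3 ≤ q) :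
    z ^ 3 - z ^ q ≤ (q - 3) * z ^ 2 * (1 - z) := by
  rcases hz.eq_or_lt with rfl | hz
  · simp [zero_rpow (by linarith : q ≠ 0)]
  have hsplit : z ^ q = z ^ 3 * z ^ (q - 3) := by
    rw [← rpow_natCast, ← rpow_add hz]
    norm_num
  calc z ^ 3 - z ^ q = z ^ 3 * (1 - z ^ (q - 3)) := by rw [hsplit]; ring
    _ ≤ z ^ 3 * ((q - 3) * (z⁻¹ - 1)) := by gcongr; exact one_sub_rpow_le hz (by linarith)
    _ = (q - 3) * z ^ 2 * (1 - z) := by field_simp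

theorem one_sub_mul_le_rpow_add_rpow_one_sub {q x : ℝ} (hq : 3 ≤ q) (hx0 : 0 ≤ x)
    (hx1 : x ≤ 1) : 1 - q * x * (1 - x) ≤ x ^ q + (1 - x) ^ q := by
  have hx := pow_three_sub_rpow_le hx0 hq
  have hx' := pow_three_sub_rpow_le (sub_nonneg.2 hx1) hq
  linear_combination hx + hx'

noncomputable def powSum (p t : ℝ) : ℝ := (1 + t) ^ p + (1 - t) ^ p

noncomputable def powDiff (p t : ℝ) : ℝ := (1 + t) ^ p - (1 - t) ^ p

section Derivatives

variable {p t : ℝ}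

theorem hasDerivAt_one_add_rpow (hp : 1 ≤ p) :
    HasDerivAt (fun s => (1 + s) ^ p) (p * (1 + t) ^ (p - 1)) t := by
  simpa using ((hasDerivAt_id t).const_add 1).rpow_const (p := p) (Or.inr hp)

theorem hasDerivAt_one_sub_rpow (hp : 1 ≤ p) :
    HasDerivAt (fun s => (1 - s) ^ p) (-(p * (1 - t) ^ (p - 1))) t := by
  simpa using ((hasDerivAt_id t).const_sub 1).rpow_const (p := p) (Or.inr hp)

theorem hasDerivAt_powSum (hp : 1 ≤ p) : HasDerivAt (powSum p) (p * powDiff (p - 1) t) t :=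
  ((hasDerivAt_one_add_rpow hp).add (hasDerivAt_one_sub_rpow hp)).congr_deriv
    (by rw [powDiff]; ring)

theorem hasDerivAt_powDiff (hp : 1 ≤ p) : HasDerivAt (powDiff p) (p * powSum (p - 1) t) t :=
  ((hasDerivAt_one_add_rpow hp).sub (hasDerivAt_one_sub_rpow hp)).congr_deriv
    (by rw [powSum]; ring)

theorem powDiff_nonneg (hp : 0 ≤ p) (ht0 : 0 ≤ t) (ht1 : t ≤ 1) : 0 ≤ powDiff p t :=
  sub_nonneg.2 (rpow_le_rpow (by linarith) (by linarith) hp)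

end Derivatives

theorem concaveOn_mul_sub_mul_powDiff {q c : ℝ} (hq : 3 ≤ q) :
    ConcaveOn ℝ (Icc 0 1) (fun s => c * s - q * powDiff (q - 1) s) := by
  have hderiv : ∀ s, HasDerivAt (fun s => c * s - q * powDiff (q - 1) s)
      (c - q * ((q - 1) * powSum (q - 2) s)) s := fun s => by
    have h := ((hasDerivAt_id' s).const_mul c).sub
      ((hasDerivAt_powDiff (t := s) (p := q - 1) (by linarith)).const_mul q)
    rw [show q - 1 - 1 = q - 2 by ring] at h
    exact h.congr_deriv (by ring)
  have hderiv2 : ∀ s, HasDerivAt (fun s => c - q * ((q - 1) * powSum (q - 2) s))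
      (-(q * ((q - 1) * ((q - 2) * powDiff (q - 3) s)))) s := fun s => by
    have h := (((hasDerivAt_powSum (t := s) (p := q - 2) (by linarith)).const_mul
      (q - 1)).const_mul q).const_sub c
    rwa [show q - 2 - 1 = q - 3 by ring] at h
  refine concaveOn_of_hasDerivWithinAt2_nonpos (convex_Icc 0 1)
    (fun s _ => (hderiv s).continuousAt.continuousWithinAt)
    (fun s _ => (hderiv s).hasDerivWithinAt) (fun s _ => (hderiv2 s).hasDerivWithinAt)
    fun s hs => ?_
  rw [interior_Icc] at hs
  have hdiff := powDiff_nonneg (p := q - 3) (by linarith) hs.1.le hs.2.le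
  exact neg_nonpos.2 <| mul_nonneg (by linarith) <| mul_nonneg (by linarith) <|
    mul_nonneg (by linarith) hdiff

theorem powSum_le {q t : ℝ} (hq : 3 ≤ q) (ht0 : 0 ≤ t) (ht1 : t ≤ 1) :
    powSum q t ≤ 2 + (2 ^ q - 2) * t ^ 2 := by
  set c : ℝ := 2 ^ q - 2
  have hderiv : ∀ s, HasDerivAt (fun s => 2 + c * s ^ 2 - powSum q s)
      (2 * c * s - q * powDiff (q - 1) s) s := fun s =>
    ((((hasDerivAt_pow 2 s).const_mul c).const_add 2).sub
      (hasDerivAt_powSum (by linarith))).congr_deriv (by ring)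
  have hq0 : q ≠ 0 := by linarith
  have := nonneg_on_Icc_of_concaveOn_deriv (fun s _ => hderiv s)
    (concaveOn_mul_sub_mul_powDiff hq) (by norm_num [powSum])
    (by norm_num [powSum, c, zero_rpow hq0]) (by norm_num [powDiff]) ⟨ht0, ht1⟩
  linarith

theorem rpow_add_rpow_one_sub_le {q x : ℝ} (hq : 3 ≤ q) (hx0 : 0 ≤ x) (hx1 : x ≤ 1) :
    x ^ q + (1 - x) ^ q ≤ 1 - (1 - 2 * (1 / 2) ^ q) * (4 * x * (1 - x)) := by
  wlog hx : 1 / 2 ≤ x generalizing x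
  · have h := this (x := 1 - x) (by linarith) (by linarith) (by linarith)
    rw [sub_sub_cancel] at h
    linarith
  have h := powSum_le hq (t := 2 * x - 1) (by linarith) (by linarith)
  rw [powSum, show 1 + (2 * x - 1) = 2 * x by ring, show 1 - (2 * x - 1) = 2 * (1 - x) by ring,
    mul_rpow (by norm_num) hx0, mul_rpow (by norm_num) (by linarith)] at h
  have hc : (0 : ℝ) < 2 ^ q := by positivity
  rw [one_div, inv_rpow (by norm_num)]
  field_simp
  nlinarith

end TsallisBin

open TsallisBin in
/-- For `q ≥ 3` and `x ∈ [0,1]`,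
`2·Hqᵀ(1/2)·2x(1-x) ≤ Hqᵀ(x) ≤ (q/(2(q-1)))·2x(1-x)`. -/
theorem tsallis_binary_entropy_bounds_q_ge_three (q x : ℝ) (hq : 3 ≤ q)
    (hx0 : 0 ≤ x) (hx1 : x ≤ 1) :
    2 * tsallisBin q (1 / 2) * (2 * x * (1 - x)) ≤ tsallisBin q x ∧
      tsallisBin q x ≤ (q / (2 * (q - 1))) * (2 * x * (1 - x)) := by
  have hq1 : 0 < q - 1 := by linarith
  unfold tsallisBin
  constructor
  · have h := rpow_add_rpow_one_sub_le hq hx0 hx1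
    calc 2 * ((1 - (1 / 2) ^ q - (1 - 1 / 2) ^ q) / (q - 1)) * (2 * x * (1 - x))
        = (1 - 2 * (1 / 2) ^ q) * (4 * x * (1 - x)) / (q - 1) := by norm_num; ring
      _ ≤ (1 - x ^ q - (1 - x) ^ q) / (q - 1) := by gcongr; linarith
  · have h := one_sub_mul_le_rpow_add_rpow_one_sub hq hx0 hx1
    calc (1 - x ^ q - (1 - x) ^ q) / (q - 1) ≤ q * x * (1 - x) / (q - 1) := by gcongr; linarith
      _ = q / (2 * (q - 1)) * (2 * x * (1 - x)) := by field_simp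
end

section
/- For every real q with 0 < q < 1 and every x in [0,1], the function T(x) = (1+x)^q - (1-x)^q - 2^q·x is nonpositive. -/
/-!
The map `g y = (1 + y) ^ q - (1 - y) ^ q` is convex on `[0, 1]`: its second derivative
`q (q - 1) ((1 + y) ^ (q - 2) - (1 - y) ^ (q - 2))` is a product of two nonpositive factors.
Hence `g` lies below its chord from `g 0 = 0` to `g 1 = 2 ^ q`, i.e. `g x ≤ 2 ^ q x`.
-/

open Real Set

section OneAddOneSub

variable {y : ℝ}

theorem hasDerivAt_rpow_one_add (p : ℝ) (hy : 0 < 1 + y) :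
    HasDerivAt (fun y : ℝ => (1 + y) ^ p) (p * (1 + y) ^ (p - 1)) y := by
  simpa using ((hasDerivAt_id y).const_add 1).rpow_const (p := p) (Or.inl hy.ne')

theorem hasDerivAt_rpow_one_sub (p : ℝ) (hy : 0 < 1 - y) :
    HasDerivAt (fun y : ℝ => (1 - y) ^ p) (-(p * (1 - y) ^ (p - 1))) y := by
  simpa using ((hasDerivAt_id y).const_sub 1).rpow_const (p := p) (Or.inl hy.ne')

theorem hasDerivAt_rpow_one_add_sub_rpow_one_sub (p : ℝ) (hy₁ : 0 < 1 + y) (hy₂ : 0 < 1 - y) :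
    HasDerivAt (fun y : ℝ => (1 + y) ^ p - (1 - y) ^ p)
      (p * ((1 + y) ^ (p - 1) + (1 - y) ^ (p - 1))) y :=
  ((hasDerivAt_rpow_one_add p hy₁).sub (hasDerivAt_rpow_one_sub p hy₂)).congr_deriv (by ring)

theorem hasDerivAt_rpow_one_add_add_rpow_one_sub (p : ℝ) (hy₁ : 0 < 1 + y) (hy₂ : 0 < 1 - y) :
    HasDerivAt (fun y : ℝ => (1 + y) ^ p + (1 - y) ^ p)
      (p * ((1 + y) ^ (p - 1) - (1 - y) ^ (p - 1))) y :=
  ((hasDerivAt_rpow_one_add p hy₁).add (hasDerivAt_rpow_one_sub p hy₂)).congr_deriv (by ring)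

end OneAddOneSub

theorem convexOn_rpow_one_add_sub_rpow_one_sub {q : ℝ} (hq0 : 0 ≤ q) (hq1 : q ≤ 1) :
    ConvexOn ℝ (Icc 0 1) (fun y : ℝ => (1 + y) ^ q - (1 - y) ^ q) := by
  refine convexOn_of_hasDerivWithinAt2_nonneg (convex_Icc 0 1)
    (f' := fun y => q * ((1 + y) ^ (q - 1) + (1 - y) ^ (q - 1)))
    (f'' := fun y => q * ((q - 1) * ((1 + y) ^ (q - 1 - 1) - (1 - y) ^ (q - 1 - 1))))
    ?_ ?_ ?_ ?_
  · exact (((continuous_const.add continuous_id).rpow_const fun _ => Or.inr hq0).sub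
      ((continuous_const.sub continuous_id).rpow_const fun _ => Or.inr hq0)).continuousOn
  all_goals
    rw [interior_Icc]
    rintro y ⟨hy0, hy1⟩
    have hy₁ : 0 < 1 + y := by linarith
    have hy₂ : 0 < 1 - y := by linarith
  · exact (hasDerivAt_rpow_one_add_sub_rpow_one_sub q hy₁ hy₂).hasDerivWithinAt
  · exact ((hasDerivAt_rpow_one_add_add_rpow_one_sub (q - 1) hy₁ hy₂).const_mul q).hasDerivWithinAt
  · have hpow : (1 + y) ^ (q - 1 - 1) ≤ (1 - y) ^ (q - 1 - 1) :=
      rpow_le_rpow_of_nonpos hy₂ (by linarith) (by linarith)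
    exact mul_nonneg hq0 (mul_nonneg_of_nonpos_of_nonpos (by linarith) (by linarith))

/-- For `0 < q < 1` and `x ∈ [0,1]`, `T(x) = (1+x)^q - (1-x)^q - 2^q·x ≤ 0`. -/
theorem T_nonpos (q x : ℝ) (hq0 : 0 < q) (hq1 : q < 1) (hx0 : 0 ≤ x) (hx1 : x ≤ 1) :
    (1 + x) ^ q - (1 - x) ^ q - (2 : ℝ) ^ q * x ≤ 0 := by
  have hchord := (convexOn_rpow_one_add_sub_rpow_one_sub hq0.le hq1.le).2
    (left_mem_Icc.2 zero_le_one) (right_mem_Icc.2 zero_le_one)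
    (sub_nonneg.2 hx1) hx0 (sub_add_cancel 1 x)
  norm_num [zero_rpow hq0.ne'] at hchord
  linarith
end
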